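/- arXiv:2409.15447 — 4 statements merged into one kernel-verified Lean document; each statement's English description precedes it below -/
import Mathlib

section
/- Let d : ℕ. The quotient of the closed unit ball closedBall 0 1 in EuclideanSpace ℝ (Fin (d+1)) by the equivalence relation identifying all points of the boundary sphere Metric.sphere 0 1 to one point (and identifying no other points) is homeomorphic to the unit sphere Metric.sphere 0 1 in EuclideanSpace ℝ (Fin (d+2)). -/
open Metric

noncomputable def collapseMap (d : ℕ) (x : EuclideanSpace ℝ (Fin (d + 1))) :
    EuclideanSpace ℝ (Fin (d + 2)) :=
  WithLp.toLp 2 (Fin.snoc (fun i => 2 * Real.sqrt (1 - ‖x‖ ^ 2) * x i) (2 * ‖x‖ ^ 2 - 1) : Fin (d+2) → ℝ)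

lemma collapseMap_castSucc (d : ℕ) (x : EuclideanSpace ℝ (Fin (d + 1))) (j : Fin (d+1)) :
    collapseMap d x j.castSucc = 2 * Real.sqrt (1 - ‖x‖ ^ 2) * x j := by
  simp [collapseMap]

lemma collapseMap_last (d : ℕ) (x : EuclideanSpace ℝ (Fin (d + 1))) :
    collapseMap d x (Fin.last (d+1)) = 2 * ‖x‖ ^ 2 - 1 := by
  simp [collapseMap]

lemma sum_sq_eq_norm_sq {n : ℕ} (x : EuclideanSpace ℝ (Fin n)) :
    ∑ i, x i ^ 2 = ‖x‖ ^ 2 := by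
  rw [EuclideanSpace.norm_eq, Real.sq_sqrt (by positivity)]
  simp [Real.norm_eq_abs, sq_abs]

lemma norm_collapseMap (d : ℕ) (x : EuclideanSpace ℝ (Fin (d + 1))) (hx : ‖x‖ ≤ 1) :
    ‖collapseMap d x‖ = 1 := by
  have h1 : 0 ≤ 1 - ‖x‖ ^ 2 := by nlinarith [norm_nonneg x]
  have hsq : Real.sqrt (1 - ‖x‖ ^ 2) ^ 2 = 1 - ‖x‖ ^ 2 := Real.sq_sqrt h1
  rw [EuclideanSpace.norm_eq]
  have : ∑ i, ‖collapseMap d x i‖ ^ 2 = 1 := by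
    simp only [Real.norm_eq_abs, sq_abs]
    rw [Fin.sum_univ_castSucc]
    simp only [collapseMap_castSucc, collapseMap_last]
    have : ∑ i, (2 * Real.sqrt (1 - ‖x‖ ^ 2) * x i) ^ 2
        = 4 * (1 - ‖x‖ ^ 2) * ∑ i, x i ^ 2 := by
      rw [Finset.mul_sum]
      congr 1; ext i; nlinarith [hsq]
    rw [this, sum_sq_eq_norm_sq]
    ring
  rw [this, Real.sqrt_one]

lemma continuous_collapseMap (d : ℕ) : Continuous (collapseMap d) := by
  have h : Continuous fun x : EuclideanSpace ℝ (Fin (d+1)) =>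
      ((Fin.snoc (fun i => 2 * Real.sqrt (1 - ‖x‖ ^ 2) * x i) (2 * ‖x‖ ^ 2 - 1)) :
        Fin (d+2) → ℝ) := by
    apply continuous_pi
    intro i
    refine Fin.lastCases ?_ ?_ i
    · simp only [Fin.snoc_last]
      fun_prop
    · intro j
      simp only [Fin.snoc_castSucc]
      have hj : Continuous fun x : EuclideanSpace ℝ (Fin (d+1)) => x j :=
        (EuclideanSpace.proj j).continuous
      fun_prop
  exact (PiLp.continuousLinearEquiv 2 ℝ (fun _ : Fin (d+2) => ℝ)).symm.continuous.comp h

lemma collapseMap_eq_iff (d : ℕ) (x y : EuclideanSpace ℝ (Fin (d + 1)))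
    (hx : ‖x‖ ≤ 1) (hy : ‖y‖ ≤ 1) :
    collapseMap d x = collapseMap d y ↔ (x = y ∨ (‖x‖ = 1 ∧ ‖y‖ = 1)) := by
  constructor
  · intro h
    have hlast := congrArg (fun v => v (Fin.last (d+1))) h
    rw [collapseMap_last, collapseMap_last] at hlast
    have hnorm : ‖x‖ = ‖y‖ := by
      have := norm_nonneg x; have := norm_nonneg y; nlinarith
    by_cases h1 : ‖x‖ = 1
    · exact Or.inr ⟨h1, hnorm ▸ h1⟩
    · left
      have hlt : ‖x‖ < 1 := lt_of_le_of_ne hx h1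
      have hpos : 0 < Real.sqrt (1 - ‖x‖ ^ 2) := by
        apply Real.sqrt_pos.mpr; nlinarith [norm_nonneg x]
      ext j
      have hc := congrArg (fun v => v (Fin.castSucc j)) h
      rw [collapseMap_castSucc, collapseMap_castSucc, ← hnorm] at hc
      have := mul_left_cancel₀ (by positivity : (2 * Real.sqrt (1 - ‖x‖ ^ 2)) ≠ 0)
        (by linarith [hc] : 2 * Real.sqrt (1 - ‖x‖ ^ 2) * x j
          = 2 * Real.sqrt (1 - ‖x‖ ^ 2) * y j)
      exact this
  · rintro (rfl | ⟨h1, h2⟩)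
    · rfl
    · ext i
      refine Fin.lastCases ?_ ?_ i
      · rw [collapseMap_last, collapseMap_last, h1, h2]
      · intro j
        rw [collapseMap_castSucc, collapseMap_castSucc, h1, h2]
        simp

lemma collapseMap_surj (d : ℕ) (y : EuclideanSpace ℝ (Fin (d + 2))) (hy : ‖y‖ = 1) :
    ∃ x : EuclideanSpace ℝ (Fin (d + 1)), ‖x‖ ≤ 1 ∧ collapseMap d x = y := by
  set t : ℝ := y (Fin.last (d+1)) with ht_def
  have hsum : ∑ j : Fin (d+1), y (Fin.castSucc j) ^ 2 + t ^ 2 = 1 := by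
    have := sum_sq_eq_norm_sq y
    rw [hy] at this
    rw [Fin.sum_univ_castSucc] at this
    simpa using this
  have hsnn : 0 ≤ ∑ j : Fin (d+1), y (Fin.castSucc j) ^ 2 :=
    Finset.sum_nonneg fun j _ => sq_nonneg _
  have ht1 : t ≤ 1 := by nlinarith
  by_cases ht : t = 1
  · refine ⟨EuclideanSpace.single 0 1, ?_, ?_⟩
    · rw [EuclideanSpace.norm_single]; simp
    · have hx1 : ‖(EuclideanSpace.single (0 : Fin (d+1)) (1:ℝ))‖ = 1 := by
        rw [EuclideanSpace.norm_single]; simp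
      have hzero : ∀ j : Fin (d+1), y (Fin.castSucc j) = 0 := by
        intro j
        have : ∑ j : Fin (d+1), y (Fin.castSucc j) ^ 2 = 0 := by nlinarith
        have := (Finset.sum_eq_zero_iff_of_nonneg (fun j _ => sq_nonneg _)).mp this j
          (Finset.mem_univ j)
        exact pow_eq_zero_iff (by norm_num) |>.mp this
      ext i
      refine Fin.lastCases ?_ ?_ i
      · rw [collapseMap_last, hx1, ← ht_def, ht]; ring
      · intro j
        rw [collapseMap_castSucc, hx1, hzero j]
        simp
  · have htlt : t < 1 := lt_of_le_of_ne ht1 ht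
    set c : ℝ := Real.sqrt (2 * (1 - t)) with hc_def
    have hcpos : 0 < c := Real.sqrt_pos.mpr (by linarith)
    have hcsq : c ^ 2 = 2 * (1 - t) := Real.sq_sqrt (by linarith)
    set x : EuclideanSpace ℝ (Fin (d+1)) := WithLp.toLp 2 (c⁻¹ • (fun j => y (Fin.castSucc j))) with hx_def
    have hxj : ∀ j, x j = c⁻¹ * y (Fin.castSucc j) := fun j => rfl
    have hxsq : ‖x‖ ^ 2 = (1 + t) / 2 := by
      rw [← sum_sq_eq_norm_sq]
      have : ∑ j, x j ^ 2 = c⁻¹ ^ 2 * ∑ j : Fin (d+1), y (Fin.castSucc j) ^ 2 := by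
        rw [Finset.mul_sum]; congr 1; ext j; rw [hxj]; ring
      rw [this]
      have h2 : ∑ j : Fin (d+1), y (Fin.castSucc j) ^ 2 = 1 - t ^ 2 := by linarith
      rw [h2, inv_pow, hcsq]
      have hne : (2:ℝ) * (1 - t) ≠ 0 := by nlinarith
      field_simp
      ring
    have hxle : ‖x‖ ≤ 1 := by
      have := norm_nonneg x; nlinarith
    refine ⟨x, hxle, ?_⟩
    have hkey : 2 * Real.sqrt (1 - ‖x‖ ^ 2) = c := by
      rw [hxsq]
      rw [show (1 : ℝ) - (1 + t)/2 = (1 - t)/2 by ring]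
      rw [show (2 : ℝ) * (1 - t) = 2^2 * ((1 - t)/2) by ring] at hc_def
      rw [hc_def, Real.sqrt_mul (by norm_num), Real.sqrt_sq (by norm_num)]
    ext i
    refine Fin.lastCases ?_ ?_ i
    · rw [collapseMap_last, hxsq]; ring
    · intro j
      rw [collapseMap_castSucc, hkey, hxj]
      field_simp

/-- Collapsing the boundary sphere of the closed unit ball in `ℝ^{d+1}` (a
`(d+1)`-dimensional topological disk) to a single point yields a space
homeomorphic to the unit sphere in `ℝ^{d+2}`, i.e. a sphere of dimension `d+1`. -/
theorem ball_quotient_sphere_homeomorph_sphere (d : ℕ)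
    (s : Setoid (closedBall (0 : EuclideanSpace ℝ (Fin (d + 1))) 1))
    (hs : ∀ x y : closedBall (0 : EuclideanSpace ℝ (Fin (d + 1))) 1,
      s.r x y ↔ x = y ∨
        ((x : EuclideanSpace ℝ (Fin (d + 1))) ∈ sphere (0 : EuclideanSpace ℝ (Fin (d + 1))) 1 ∧
         (y : EuclideanSpace ℝ (Fin (d + 1))) ∈ sphere (0 : EuclideanSpace ℝ (Fin (d + 1))) 1)) :
    Nonempty (Quotient s ≃ₜ sphere (0 : EuclideanSpace ℝ (Fin (d + 2))) 1) := by
  have hmem : ∀ x : closedBall (0 : EuclideanSpace ℝ (Fin (d + 1))) 1,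
      ‖(x : EuclideanSpace ℝ (Fin (d + 1)))‖ ≤ 1 := fun x => by
    have := x.2
    rwa [mem_closedBall, dist_zero_right] at this
  set F : closedBall (0 : EuclideanSpace ℝ (Fin (d + 1))) 1 →
      sphere (0 : EuclideanSpace ℝ (Fin (d + 2))) 1 :=
    fun x => ⟨collapseMap d x, by
      rw [mem_sphere_zero_iff_norm]; exact norm_collapseMap d x (hmem x)⟩ with hF_def
  have hFcont : Continuous F :=
    Continuous.subtype_mk ((continuous_collapseMap d).comp continuous_subtype_val) _
  have hresp : ∀ a b : closedBall (0 : EuclideanSpace ℝ (Fin (d + 1))) 1,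
      a ≈ b → F a = F b := by
    intro a b hab
    rcases (hs a b).mp hab with rfl | ⟨h1, h2⟩
    · rfl
    · apply Subtype.ext
      rw [mem_sphere_zero_iff_norm] at h1 h2
      exact (collapseMap_eq_iff d a b (hmem a) (hmem b)).mpr (Or.inr ⟨h1, h2⟩)
  set G : Quotient s → sphere (0 : EuclideanSpace ℝ (Fin (d + 2))) 1 :=
    Quotient.lift F hresp with hG_def
  have hGcont : Continuous G := hFcont.quotient_lift hresp
  have hGbij : Function.Bijective G := by
    constructor
    · rintro ⟨a⟩ ⟨b⟩ h
      have hab : F a = F b := h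
      have := Subtype.ext_iff.mp hab
      rcases (collapseMap_eq_iff d a b (hmem a) (hmem b)).mp this with heq | ⟨h1, h2⟩
      · exact congrArg _ (Subtype.ext heq)
      · apply Quotient.sound
        refine (hs a b).mpr (Or.inr ⟨?_, ?_⟩)
        · rwa [mem_sphere_zero_iff_norm]
        · rwa [mem_sphere_zero_iff_norm]
    · rintro ⟨y, hy⟩
      rw [mem_sphere_zero_iff_norm] at hy
      obtain ⟨x, hx, hfx⟩ := collapseMap_surj d y hy
      refine ⟨Quotient.mk s ⟨x, ?_⟩, ?_⟩
      · rwa [mem_closedBall, dist_zero_right]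
      · exact Subtype.ext hfx
  have hcb : CompactSpace (closedBall (0 : EuclideanSpace ℝ (Fin (d + 1))) 1) :=
    isCompact_iff_compactSpace.mp (isCompact_closedBall _ _)
  have : CompactSpace (Quotient s) := Quotient.compactSpace
  exact ⟨Continuous.homeoOfEquivCompactToT2 (f := Equiv.ofBijective G hGbij) hGcont⟩
end

section
/- Let d : ℕ and let x₀, x₁, …, x_d be d+1 affinely independent points of EuclideanSpace ℝ (Fin d). Then the map m : EuclideanSpace ℝ (Fin d) → ℝ^{d+1} defined by m(y) = (dist(x₀, y), dist(x₁, y), …, dist(x_d, y)), the vector of Euclidean distances from y to the d+1 points, is injective. -/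
/-- The vector of Euclidean distances to `d+1` affinely independent points of `ℝ^d`
is an injective function of the point. -/
theorem dist_vector_injective {d : ℕ}
    (x : Fin (d + 1) → EuclideanSpace ℝ (Fin d))
    (hx : AffineIndependent ℝ x) :
    Function.Injective (fun y : EuclideanSpace ℝ (Fin d) =>
      (fun j : Fin (d + 1) => dist (x j) y)) := by
  intro y z h
  have hspan : affineSpan ℝ (Set.range x) = ⊤ := by
    rw [hx.affineSpan_eq_top_iff_card_eq_finrank_add_one]
    simp [finrank_euclideanSpace]
  have hmem : ∀ j, x j ∈ AffineSubspace.perpBisector y z := fun j => by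
    rw [AffineSubspace.mem_perpBisector_iff_dist_eq']
    have := congrFun h j
    simpa [dist_comm] using this
  have : affineSpan ℝ (Set.range x) ≤ AffineSubspace.perpBisector y z :=
    affineSpan_le.mpr (Set.range_subset_iff.mpr hmem)
  rw [hspan, top_le_iff] at this
  exact AffineSubspace.perpBisector_eq_top.mp this
end

section
/- Let d : ℕ, let k > 0 be a real number, and let x₀, x₁, …, x_d be d+1 affinely independent points of EuclideanSpace ℝ (Fin d). Define G : EuclideanSpace ℝ (Fin d) → ℂ^{d+1} by (G y)_j = (1/dist(x_j, y)) · exp(−i k · dist(x_j, y)). Then G is injective on the set {y : y ≠ x_j for all j}. -/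
/-- The componentwise Green's-function map `y ↦ (g_k(dist(x_j, y)))_j`, for `d+1`
affinely independent scatterer locations `x_j` in `ℝ^d` and wavenumber `k > 0`,
is injective away from the scatterer locations. -/
theorem green_vector_injective {d : ℕ} (k : ℝ) (hk : 0 < k)
    (x : Fin (d + 1) → EuclideanSpace ℝ (Fin d))
    (hx : AffineIndependent ℝ x) :
    Set.InjOn
      (fun y : EuclideanSpace ℝ (Fin d) =>
        (fun j : Fin (d + 1) =>
          (1 / (dist (x j) y : ℂ)) * Complex.exp (-Complex.I * k * (dist (x j) y))))
      {y : EuclideanSpace ℝ (Fin d) | ∀ j, y ≠ x j} := by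
  intro y₁ h₁ y₂ h₂ h
  have hd : ∀ j, dist (x j) y₁ = dist (x j) y₂ := by
    intro j
    have hj := congrFun h j
    simp only at hj
    have h1 : (0:ℝ) < dist (x j) y₁ := dist_pos.2 fun he => h₁ j he.symm
    have h2 : (0:ℝ) < dist (x j) y₂ := dist_pos.2 fun he => h₂ j he.symm
    have habs := congrArg (‖·‖) hj
    have hre1 : (-Complex.I * k * (dist (x j) y₁ : ℂ)).re = 0 := by simp
    have hre2 : (-Complex.I * k * (dist (x j) y₂ : ℂ)).re = 0 := by simp
    rw [norm_mul, norm_mul, Complex.norm_exp, Complex.norm_exp, hre1, hre2] at habs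
    simp only [Real.exp_zero, mul_one, norm_div, norm_one, Complex.norm_real, Real.norm_eq_abs,
      abs_of_pos h1, abs_of_pos h2] at habs
    rw [div_eq_div_iff h1.ne' h2.ne'] at habs
    linarith
  have hspan : affineSpan ℝ (Set.range x) = ⊤ := by
    rw [hx.affineSpan_eq_top_iff_card_eq_finrank_add_one]
    simp
  have hle : affineSpan ℝ (Set.range x) ≤ AffineSubspace.perpBisector y₁ y₂ := by
    rw [affineSpan_le]
    rintro _ ⟨j, rfl⟩
    rw [SetLike.mem_coe, AffineSubspace.mem_perpBisector_iff_dist_eq']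
    rw [dist_comm y₁, dist_comm y₂]
    exact hd j
  have hmem : y₁ ∈ AffineSubspace.perpBisector y₁ y₂ :=
    hle (hspan ▸ AffineSubspace.mem_top ℝ _ y₁)
  have hdd : dist y₁ y₁ = dist y₁ y₂ :=
    (AffineSubspace.mem_perpBisector_iff_dist_eq).1 hmem
  have : dist y₁ y₂ = 0 := by simpa using hdd.symm
  exact dist_eq_zero.mp this
end

section
/- Let f : ℝ → EuclideanSpace ℝ (Fin n) be continuous on the interval [0,1] with f 0 = f 1, and suppose there exists t₀ ∈ [0,1] with f t₀ = 0. Then the total variation of f on [0,1] (its arc length as a closed curve) satisfies eVariationOn f [0,1] ≥ 2 · sup_{t ∈ [0,1]} ‖f t‖. -/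
/-- A closed curve in `ℝ^n` passing through the origin has total variation (arc
length) at least twice the supremum of the norm of its points: the length of a
loop through `0` is at least `2 σ`, where `σ = sup_{t ∈ [0,1]} ‖f t‖`. -/
theorem length_of_loop_through_origin {n : ℕ}
    (f : ℝ → EuclideanSpace ℝ (Fin n))
    (hf : ContinuousOn f (Set.Icc 0 1))
    (hloop : f 0 = f 1)
    (hzero : ∃ t₀ ∈ Set.Icc (0 : ℝ) 1, f t₀ = 0) :
    2 * ⨆ t ∈ Set.Icc (0 : ℝ) 1, (‖f t‖₊ : ENNReal) ≤
      eVariationOn f (Set.Icc 0 1) := by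
  obtain ⟨t₀, ht₀, hft₀⟩ := hzero
  rw [ENNReal.mul_iSup]
  refine iSup_le fun t => ?_
  rw [ENNReal.mul_iSup]
  refine iSup_le fun ht => ?_
  set a := min t t₀ with ha_def
  set b := max t t₀ with hb_def
  have ha : a ∈ Set.Icc (0:ℝ) 1 := ⟨le_min ht.1 ht₀.1, min_le_of_left_le ht.2⟩
  have hb : b ∈ Set.Icc (0:ℝ) 1 := ⟨le_max_of_le_left ht.1, max_le ht.2 ht₀.2⟩
  set u : ℕ → ℝ := fun i => if i = 0 then 0 else if i = 1 then a else if i = 2 then b else 1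
    with hu_def
  have hu : Monotone u := by
    apply monotone_nat_of_le_succ
    intro i
    match i with
    | 0 => simpa [hu_def] using ha.1
    | 1 => simp [hu_def]; exact min_le_max
    | 2 => simpa [hu_def] using hb.2
    | (m+3) => simp [hu_def]
  have hus : ∀ i, u i ∈ Set.Icc (0:ℝ) 1 := by
    intro i
    match i with
    | 0 => simp [hu_def]
    | 1 => simpa [hu_def] using ha
    | 2 => simpa [hu_def] using hb
    | (m+3) => simp [hu_def]
  have key := eVariationOn.sum_le (f := f) (n := 3) hu hus
  have hsum : ∑ i ∈ Finset.range 3, edist (f (u (i+1))) (f (u i)) =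
      edist (f a) (f 0) + edist (f b) (f a) + edist (f 1) (f b) := by
    simp [Finset.sum_range_succ, hu_def]
  rw [hsum] at key
  have hab : edist (f b) (f a) = (‖f t‖₊ : ENNReal) := by
    rcases le_total t t₀ with h | h
    · rw [ha_def, hb_def, min_eq_left h, max_eq_right h, hft₀, edist_comm, edist_zero_right, enorm_eq_nnnorm]
    · rw [ha_def, hb_def, min_eq_right h, max_eq_left h, hft₀, edist_zero_right, enorm_eq_nnnorm]
  have htri : (‖f t‖₊ : ENNReal) ≤ edist (f a) (f 0) + edist (f 1) (f b) := by
    calc (‖f t‖₊ : ENNReal) = edist (f a) (f b) := by rw [edist_comm]; exact hab.symm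
      _ ≤ edist (f a) (f 0) + edist (f 0) (f b) := edist_triangle _ _ _
      _ = edist (f a) (f 0) + edist (f 1) (f b) := by rw [hloop, edist_comm]
  calc 2 * (‖f t‖₊ : ENNReal) = (‖f t‖₊ : ENNReal) + ‖f t‖₊ := two_mul _
    _ ≤ (edist (f a) (f 0) + edist (f 1) (f b)) + edist (f b) (f a) := by
        rw [hab]; exact add_le_add_left htri _
    _ = edist (f a) (f 0) + edist (f b) (f a) + edist (f 1) (f b) := by ring
    _ ≤ eVariationOn f (Set.Icc 0 1) := key
end
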